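/- For any distinct spectral points f_0, f_1 ∈ Δ(𝒢), there exists a vertex-transitive finite simple graph G such that f_0(G) ≠ f_1(G). -/

import Mathlib

open Filter

/-- A bundled finite simple graph. -/
structure FinGraph where
  V : Type
  [fintypeV : Fintype V]
  G : SimpleGraph V

attribute [instance] FinGraph.fintypeV

namespace FinGraph

/-- Helper constructor. -/
def mk' (V : Type) [Fintype V] (G : SimpleGraph V) : FinGraph := ⟨V, G⟩

/-- Strong product of simple graphs. -/
def strongProdAdj {α β : Type} (G : SimpleGraph α) (H : SimpleGraph β) :
    SimpleGraph (α × β) where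
  Adj x y := x ≠ y ∧ (G.Adj x.1 y.1 ∨ x.1 = y.1) ∧ (H.Adj x.2 y.2 ∨ x.2 = y.2)
  symm := by
    constructor
    rintro x y ⟨hne, h1, h2⟩
    refine ⟨hne.symm, ?_, ?_⟩
    · rcases h1 with h | h
      · exact Or.inl h.symm
      · exact Or.inr h.symm
    · rcases h2 with h | h
      · exact Or.inl h.symm
      · exact Or.inr h.symm
  loopless := by constructor; rintro x ⟨h, -⟩; exact h rfl

/-- The `n`-th strong power of a simple graph, on vertex set `Fin n → α`. -/
def strongPowAdj {α : Type} (G : SimpleGraph α) (n : ℕ) : SimpleGraph (Fin n → α) where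
  Adj x y := x ≠ y ∧ ∀ i, G.Adj (x i) (y i) ∨ x i = y i
  symm := by
    constructor
    rintro x y ⟨hne, h⟩
    refine ⟨hne.symm, fun i => ?_⟩
    rcases h i with h' | h'
    · exact Or.inl h'.symm
    · exact Or.inr h'.symm
  loopless := by constructor; rintro x ⟨h, -⟩; exact h rfl

/-- Disjoint union of simple graphs. -/
def disjUnionAdj {α β : Type} (G : SimpleGraph α) (H : SimpleGraph β) :
    SimpleGraph (α ⊕ β) where
  Adj x y := (∃ a b, x = Sum.inl a ∧ y = Sum.inl b ∧ G.Adj a b) ∨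
             (∃ a b, x = Sum.inr a ∧ y = Sum.inr b ∧ H.Adj a b)
  symm := by
    constructor
    rintro x y (⟨a, b, rfl, rfl, h⟩ | ⟨a, b, rfl, rfl, h⟩)
    · exact Or.inl ⟨b, a, rfl, rfl, h.symm⟩
    · exact Or.inr ⟨b, a, rfl, rfl, h.symm⟩
  loopless := by
    constructor
    rintro x (⟨a, b, rfl, h, hadj⟩ | ⟨a, b, rfl, h, hadj⟩)
    · cases Sum.inl.inj h; exact hadj.ne rfl
    · cases Sum.inr.inj h; exact hadj.ne rfl

/-- Bundled strong product `G ⊠ H`. -/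
def sprod (A B : FinGraph) : FinGraph := mk' (A.V × B.V) (strongProdAdj A.G B.G)

/-- Bundled `n`-th strong power `G^{⊠ n}`. -/
def spow (A : FinGraph) (n : ℕ) : FinGraph := mk' (Fin n → A.V) (strongPowAdj A.G n)

/-- Bundled disjoint union `G ⊔ H`. -/
def dUnion (A B : FinGraph) : FinGraph := mk' (A.V ⊕ B.V) (disjUnionAdj A.G B.G)

/-- Bundled complement graph. -/
def compl (A : FinGraph) : FinGraph := mk' A.V A.Gᶜ

/-- Graph join `G + H`: the complement of the disjoint union of the complements. -/
def join (A B : FinGraph) : FinGraph := (A.compl.dUnion B.compl).compl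

/-- The edgeless graph `E_n` on `n` vertices. -/
def edgeless (n : ℕ) : FinGraph := mk' (Fin n) ⊥

/-- `cohomLE A B`: there is a cohomomorphism from `A` to `B`, i.e. a graph homomorphism
from the complement of `A` to the complement of `B`. -/
def cohomLE (A B : FinGraph) : Prop := Nonempty (A.Gᶜ →g B.Gᶜ)

/-- Asymptotic cohomomorphism preorder: `A ≲ B` iff there is `f : ℕ → ℕ` with
`f n / n → 0` and `A^{⊠ n} ≤ B^{⊠ (n + f n)}` for all `n`. -/
def asympCohomLE (A B : FinGraph) : Prop :=
  ∃ f : ℕ → ℕ, Tendsto (fun n => (f n : ℝ) / (n : ℝ)) atTop (nhds 0) ∧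
    ∀ n, cohomLE (A.spow n) (B.spow (n + f n))

/-- The asymptotic spectrum of graphs `Δ(𝒢)`: nonnegative real graph parameters that are
normalised on edgeless graphs, multiplicative under the strong product, additive under
disjoint union, and monotone under cohomomorphism. -/
def Delta : Set (FinGraph → ℝ) :=
  { f | (∀ A, 0 ≤ f A) ∧ (∀ n : ℕ, f (edgeless n) = n) ∧
        (∀ A B, f (A.sprod B) = f A * f B) ∧
        (∀ A B, f (A.dUnion B) = f A + f B) ∧
        (∀ A B, cohomLE A B → f A ≤ f B) }

/-- Vertex-transitivity of a bundled graph. -/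
def IsVertexTransitive (A : FinGraph) : Prop :=
  ∀ u v : A.V, ∃ e : A.G ≃g A.G, e u = v

/-- Cyclic distance between `i, j ∈ {0, …, p-1}` modulo `p`. -/
def cycDist (p i j : ℕ) : ℕ := min ((p + i - j) % p) ((p + j - i) % p)

/-- The fraction graph `E_{p/q}`: vertex set `ℤ_p`, distinct vertices adjacent iff
their cyclic distance modulo `p` is strictly less than `q`. -/
def fracGraph (p q : ℕ) : FinGraph :=
  mk' (Fin p)
    { Adj := fun i j => i ≠ j ∧ cycDist p i j < q
      symm := by
        constructor
        rintro i j ⟨hne, hd⟩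
        exact ⟨hne.symm, by simpa [cycDist, min_comm] using hd⟩
      loopless := ⟨fun i h => h.1 rfl⟩ }

/-- The complement of the projective rank `ξ̄_f(G)`: the infimum of `d/r` over all
assignments of `r`-dimensional subspaces of `ℂ^d` to the vertices such that distinct
non-adjacent vertices receive orthogonal subspaces. -/
noncomputable def xibar (A : FinGraph) : ℝ :=
  sInf { x : ℝ | ∃ d r : ℕ, 0 < d ∧ 0 < r ∧ x = (d : ℝ) / (r : ℝ) ∧
    ∃ W : A.V → Submodule ℂ (EuclideanSpace ℂ (Fin d)),
      (∀ v, Module.finrank ℂ (W v) = r) ∧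
      ∀ v w : A.V, v ≠ w → ¬ A.G.Adj v w →
        ∀ x ∈ W v, ∀ y ∈ W w, (inner ℂ x y : ℂ) = 0 }

end FinGraph

open FinGraph

/-!
Suppose `f₀` and `f₁` agree on all vertex-transitive graphs, and fix a graph `A` and `k : ℕ`.
Sorting the words of `A^{⊠ k}` by their type (how often each vertex of `A` occurs in them), the
identity is a cohomomorphism from `A^{⊠ k}` into the disjoint union of the at most
`(k + 1)^{|V(A)|}` induced type classes. Each class is vertex-transitive, since permuting
coordinates is an automorphism acting transitively on it, and lies below `A^{⊠ k}`. Hence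
`f₀(A)^k ≤ (k + 1)^{|V(A)|} f₁(A)^k`; taking `k`-th roots as `k → ∞` gives `f₀(A) ≤ f₁(A)`, and
`f₀ = f₁` by symmetry.
-/

open Topology in
lemma le_of_forall_pow_le_mul_pow {a b : ℝ} (hb : 0 ≤ b) (N : ℕ)
    (h : ∀ k : ℕ, a ^ k ≤ ((k : ℝ) + 1) ^ N * b ^ k) : a ≤ b := by
  by_contra! hba
  have ha : 0 < a := hb.trans_lt hba
  set r := b / a
  have hr : |r| < 1 := by
    rw [abs_of_nonneg (by positivity)]
    exact (div_lt_one ha).mpr hba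
  have hlim : Tendsto (fun k : ℕ => ((k : ℝ) + 1) ^ N * r ^ k) atTop (𝓝 0) := by
    refine squeeze_zero' (Eventually.of_forall fun k => by positivity) ?_
      (by simpa using (tendsto_pow_const_mul_const_pow_of_abs_lt_one N hr).const_mul (2 ^ N))
    filter_upwards [eventually_ge_atTop 1] with k hk
    have hk' : (k : ℝ) + 1 ≤ 2 * k := by
      have : (1 : ℝ) ≤ k := by exact_mod_cast hk
      linarith
    calc ((k : ℝ) + 1) ^ N * r ^ k ≤ (2 * k) ^ N * r ^ k := by gcongr
      _ = 2 ^ N * ((k : ℝ) ^ N * r ^ k) := by ring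
  obtain ⟨k, hk⟩ := (hlim.eventually (gt_mem_nhds one_pos)).exists
  have : a ^ k ≤ ((k : ℝ) + 1) ^ N * r ^ k * a ^ k := by
    rw [mul_assoc, ← mul_pow, div_mul_cancel₀ b ha.ne']
    exact h k
  nlinarith [pow_pos ha k]

lemma Set.bijOn_preimage_of_comp_eq {α β : Type*} (e : α ≃ α) {t : α → β} (ht : t ∘ e = t)
    (u : Set β) : Set.BijOn e (t ⁻¹' u) (t ⁻¹' u) := by
  rw [← Equiv.image_eq_iff_bijOn, Equiv.image_eq_preimage_symm, ← Set.preimage_comp]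
  conv_lhs => rw [← ht, Function.comp_assoc, e.self_comp_symm, Function.comp_id]

namespace FinGraph

open SimpleGraph

section StrongPower

variable {α : Type} (G : SimpleGraph α)

lemma strongPowAdj_or_eq {n : ℕ} {x y : Fin n → α} :
    (strongPowAdj G n).Adj x y ∨ x = y ↔ ∀ i, G.Adj (x i) (y i) ∨ x i = y i := by
  refine ⟨?_, fun h => (eq_or_ne x y).elim Or.inr fun hne => Or.inl ⟨hne, h⟩⟩
  rintro (⟨-, h⟩ | rfl)
  exacts [h, fun _ => Or.inr rfl]

def strongPowZeroIso : (⊥ : SimpleGraph (Fin 1)) ≃g strongPowAdj G 0 where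
  toEquiv := Equiv.ofUnique _ _
  map_rel_iff' {x y} := by simp [strongPowAdj, Subsingleton.elim x y]

def strongPowSuccIso (k : ℕ) : strongProdAdj G (strongPowAdj G k) ≃g strongPowAdj G (k + 1) where
  toEquiv := Fin.consEquiv fun _ => α
  map_rel_iff' {p q} := by
    change (strongPowAdj G (k + 1)).Adj (Fin.cons p.1 p.2) (Fin.cons q.1 q.2) ↔
      p ≠ q ∧ (G.Adj p.1 q.1 ∨ p.1 = q.1) ∧ ((strongPowAdj G k).Adj p.2 q.2 ∨ p.2 = q.2)
    rw [strongPowAdj_or_eq]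
    simp [strongPowAdj, Fin.forall_fin_succ, Fin.cons_inj, Prod.ext_iff]

def strongPowPermIso {k : ℕ} (π : Equiv.Perm (Fin k)) : strongPowAdj G k ≃g strongPowAdj G k where
  toFun x := x ∘ π
  invFun x := x ∘ π.symm
  left_inv x := by ext; simp
  right_inv x := by ext; simp
  map_rel_iff' {x y} := by
    simp only [strongPowAdj, Equiv.coe_fn_mk, ne_eq, Function.comp_apply,
      π.surjective.injective_comp_right.eq_iff]
    exact and_congr_right fun _ =>
      π.forall_congr_right (q := fun i => G.Adj (x i) (y i) ∨ x i = y i)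

end StrongPower

section CountVector

variable {V : Type} {k : ℕ}

noncomputable def countVector (x : Fin k → V) (v : V) : Fin (k + 1) :=
  ⟨Nat.card {i // x i = v},
    Nat.lt_succ_of_le <| (Finite.card_subtype_le _).trans_eq (Nat.card_fin k)⟩

lemma countVector_comp_perm (x : Fin k → V) (π : Equiv.Perm (Fin k)) :
    countVector (x ∘ π) = countVector x :=
  funext fun _ => Fin.ext <| Nat.card_congr (π.subtypeEquiv fun _ => Iff.rfl)

lemma exists_perm_of_countVector_eq {x y : Fin k → V} (h : countVector x = countVector y) :
    ∃ π : Equiv.Perm (Fin k), x ∘ π = y := by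
  have e : ∀ v, {i // x i = v} ≃ {i // y i = v} := fun v =>
    (Finite.card_eq.mp (congrArg Fin.val (congrFun h v))).some
  exact ⟨(Equiv.sigmaFiberEquiv y).symm.trans
    ((Equiv.sigmaCongrRight fun v => (e v).symm).trans (Equiv.sigmaFiberEquiv x)),
    funext fun i => ((e (y i)).symm ⟨i, rfl⟩).2⟩

end CountVector

noncomputable def induce (A : FinGraph) (s : Set A.V) : FinGraph :=
  @mk' s (Fintype.ofFinite s) (A.G.induce s)

lemma dUnion_G (A B : FinGraph) : (A.dUnion B).G = A.G ⊕g B.G := by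
  ext (a | a) (b | b) <;> simp [dUnion, mk', disjUnionAdj]

lemma cohomLE_of_embedding {A B : FinGraph} (e : A.G ↪g B.G) : cohomLE A B :=
  ⟨(Embedding.complEquiv e).toHom⟩

lemma cohomLE_induce (A : FinGraph) (s : Set A.V) : cohomLE (A.induce s) A :=
  cohomLE_of_embedding (Embedding.induce s)

lemma cohomLE_induce_univ (A : FinGraph) : cohomLE A (A.induce Set.univ) :=
  cohomLE_of_embedding (induceUnivIso A.G).symm.toEmbedding

lemma cohomLE_induce_empty (A : FinGraph) : cohomLE (A.induce ∅) (edgeless 0) :=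
  ⟨⟨fun x => x.2.elim, fun {x} => x.2.elim⟩⟩

lemma cohomLE_induce_union (A : FinGraph) (s t : Set A.V) :
    cohomLE (A.induce (s ∪ t)) ((A.induce s).dUnion (A.induce t)) := by
  classical
  rw [cohomLE, dUnion_G]
  change Nonempty ((A.G.induce (s ∪ t))ᶜ →g (A.G.induce s ⊕g A.G.induce t)ᶜ)
  refine ⟨⟨fun x => if hx : x.1 ∈ s then .inl ⟨x.1, hx⟩ else .inr ⟨x.1, x.2.resolve_left hx⟩,
    ?_⟩⟩
  rintro ⟨x, hx⟩ ⟨y, hy⟩ hxy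
  simp only [compl_adj, ne_eq, Subtype.mk.injEq, comap_adj, Function.Embedding.subtype_apply]
    at hxy ⊢
  split_ifs <;> simp [hxy]

lemma isVertexTransitive_induce (A : FinGraph) (s : Set A.V)
    (h : ∀ x ∈ s, ∀ y ∈ s, ∃ e : A.G ≃g A.G, Set.BijOn e s s ∧ e x = y) :
    IsVertexTransitive (A.induce s) := by
  rintro ⟨x, hx⟩ ⟨y, hy⟩
  obtain ⟨e, hes, rfl⟩ := h x hx y hy
  exact ⟨e.induce hes, rfl⟩

lemma isVertexTransitive_countVector_fiber (A : FinGraph) (k : ℕ) (c : A.V → Fin (k + 1)) :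
    IsVertexTransitive ((A.spow k).induce (countVector ⁻¹' {c})) := by
  refine isVertexTransitive_induce _ _ fun x hx y hy => ?_
  obtain ⟨π, rfl⟩ := exists_perm_of_countVector_eq (hx.trans hy.symm)
  exact ⟨strongPowPermIso A.G π, Set.bijOn_preimage_of_comp_eq (strongPowPermIso A.G π).toEquiv
    (t := countVector) (funext fun x => countVector_comp_perm x π) _, rfl⟩

namespace Delta

variable {f f₀ f₁ : FinGraph → ℝ}

lemma nonneg (hf : f ∈ Delta) (A : FinGraph) : 0 ≤ f A := hf.1 A

lemma apply_edgeless (hf : f ∈ Delta) (n : ℕ) : f (edgeless n) = n := hf.2.1 n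

lemma apply_sprod (hf : f ∈ Delta) (A B : FinGraph) : f (A.sprod B) = f A * f B := hf.2.2.1 A B

lemma apply_dUnion (hf : f ∈ Delta) (A B : FinGraph) : f (A.dUnion B) = f A + f B :=
  hf.2.2.2.1 A B

lemma mono (hf : f ∈ Delta) {A B : FinGraph} (h : cohomLE A B) : f A ≤ f B := hf.2.2.2.2 A B h

lemma apply_congr (hf : f ∈ Delta) {A B : FinGraph} (e : A.G ≃g B.G) : f A = f B :=
  (mono hf (cohomLE_of_embedding e.toEmbedding)).antisymm
    (mono hf (cohomLE_of_embedding e.symm.toEmbedding))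

lemma apply_spow (hf : f ∈ Delta) (A : FinGraph) (k : ℕ) : f (A.spow k) = f A ^ k := by
  induction k with
  | zero =>
    have e : (edgeless 1).G ≃g (A.spow 0).G := strongPowZeroIso A.G
    rw [← apply_congr hf e, apply_edgeless hf, Nat.cast_one, pow_zero]
  | succ k ih =>
    have e : (A.sprod (A.spow k)).G ≃g (A.spow (k + 1)).G := strongPowSuccIso A.G k
    rw [← apply_congr hf e, apply_sprod hf, ih, pow_succ']

lemma apply_induce_biUnion_le (hf : f ∈ Delta) (A : FinGraph) {ι : Type*} (s : Finset ι)
    (P : ι → Set A.V) : f (A.induce (⋃ i ∈ s, P i)) ≤ ∑ i ∈ s, f (A.induce (P i)) := by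
  classical
  induction s using Finset.induction_on with
  | empty => simpa [apply_edgeless hf] using mono hf (cohomLE_induce_empty A)
  | insert j s hj ih =>
    rw [Finset.set_biUnion_insert, Finset.sum_insert hj]
    calc f (A.induce (P j ∪ ⋃ i ∈ s, P i))
        ≤ f (A.induce (P j)) + f (A.induce (⋃ i ∈ s, P i)) :=
          (mono hf (cohomLE_induce_union A _ _)).trans_eq (apply_dUnion hf _ _)
      _ ≤ _ := by gcongr

lemma apply_le_sum_fiber (hf : f ∈ Delta) (A : FinGraph) {ι : Type*} [Fintype ι]
    (t : A.V → ι) : f A ≤ ∑ i, f (A.induce (t ⁻¹' {i})) := by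
  have hcover : (⋃ i ∈ Finset.univ, t ⁻¹' {i}) = Set.univ := by
    ext x
    simp
  calc f A ≤ f (A.induce Set.univ) := mono hf (cohomLE_induce_univ A)
    _ ≤ _ := hcover ▸ apply_induce_biUnion_le hf A Finset.univ _

lemma pow_le_of_eqOn_vertexTransitive (h₀ : f₀ ∈ Delta) (h₁ : f₁ ∈ Delta)
    (hvt : ∀ A, IsVertexTransitive A → f₀ A = f₁ A) (A : FinGraph) (k : ℕ) :
    f₀ A ^ k ≤ ((k : ℝ) + 1) ^ Fintype.card A.V * f₁ A ^ k := by
  classical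
  calc f₀ A ^ k = f₀ (A.spow k) := (apply_spow h₀ A k).symm
    _ ≤ ∑ c, f₀ ((A.spow k).induce (countVector ⁻¹' {c})) :=
      apply_le_sum_fiber h₀ (A.spow k) countVector
    _ = ∑ c, f₁ ((A.spow k).induce (countVector ⁻¹' {c})) :=
      Finset.sum_congr rfl fun c _ => hvt _ (isVertexTransitive_countVector_fiber A k c)
    _ ≤ ∑ _c : A.V → Fin (k + 1), f₁ A ^ k :=
      Finset.sum_le_sum fun _ _ => (mono h₁ (cohomLE_induce _ _)).trans_eq (apply_spow h₁ A k)
    _ = ((k : ℝ) + 1) ^ Fintype.card A.V * f₁ A ^ k := by simp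

lemma le_of_eqOn_vertexTransitive (h₀ : f₀ ∈ Delta) (h₁ : f₁ ∈ Delta)
    (hvt : ∀ A, IsVertexTransitive A → f₀ A = f₁ A) (A : FinGraph) : f₀ A ≤ f₁ A :=
  le_of_forall_pow_le_mul_pow (nonneg h₁ A) _ (pow_le_of_eqOn_vertexTransitive h₀ h₁ hvt A)

end Delta

end FinGraph

/-- Distinct spectral points differ on some vertex-transitive graph. -/
theorem exists_vertexTransitive_separating (f0 f1 : FinGraph → ℝ)
    (h0 : f0 ∈ Delta) (h1 : f1 ∈ Delta) (hne : f0 ≠ f1) :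
    ∃ A : FinGraph, IsVertexTransitive A ∧ f0 A ≠ f1 A := by
  by_contra! hvt
  exact hne <| funext fun A => (Delta.le_of_eqOn_vertexTransitive h0 h1 hvt A).antisymm
    (Delta.le_of_eqOn_vertexTransitive h1 h0 (fun B hB => (hvt B hB).symm) A)
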